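/- arXiv:2410.13063 — 2 statements merged into one kernel-verified Lean document; each statement's English description precedes it below -/
import Mathlib

section
/- For points X_1, …, X_n ∈ ℝ^d and x ∈ ℝ^d, with PP_n(x|σ) the perplexity defined by the Gaussian conditional distribution with bandwidth σ, the identity PP_n(x|σ)/(n σ^d) = (2π)^{d/2} · A(σ) · exp( (d/2) · B(σ)/A(σ) ) holds, where A(σ) := (n σ^d)^{−1} Σ_i K₁((x − X_i)/σ) and B(σ) := (n σ^d)^{−1} Σ_i K₂((x − X_i)/σ), with K₁(s) = (2π)^{−d/2} e^{−|s|²/2} and K₂(s) = (d(2π)^{d/2})^{−1} |s|² e^{−|s|²/2}. -/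
open scoped BigOperators

/-- The conditional tSNE neighbor probability `p_k` at bandwidth `σ`. -/
noncomputable def tsneP {d n : ℕ} (X : Fin n → EuclideanSpace ℝ (Fin d))
    (x : EuclideanSpace ℝ (Fin d)) (σ : ℝ) (j : Fin n) : ℝ :=
  Real.exp (-(‖x - X j‖ ^ 2 / (2 * σ ^ 2))) /
    ∑ k, Real.exp (-(‖x - X k‖ ^ 2 / (2 * σ ^ 2)))

/-- Perplexity `PP_n(x|σ) = exp(-Σ_k p_k log p_k)`. -/
noncomputable def perplexity {d n : ℕ} (X : Fin n → EuclideanSpace ℝ (Fin d))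
    (x : EuclideanSpace ℝ (Fin d)) (σ : ℝ) : ℝ :=
  Real.exp (-∑ j, tsneP X x σ j * Real.log (tsneP X x σ j))

/-- `K₁(s) = (2π)^{-d/2} e^{-|s|²/2}`. -/
noncomputable def K₁ {d : ℕ} (s : EuclideanSpace ℝ (Fin d)) : ℝ :=
  (2 * Real.pi) ^ (-(d : ℝ) / 2) * Real.exp (-‖s‖ ^ 2 / 2)

/-- `K₂(s) = (d(2π)^{d/2})⁻¹ |s|² e^{-|s|²/2}`. -/
noncomputable def K₂ {d : ℕ} (s : EuclideanSpace ℝ (Fin d)) : ℝ :=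
  ((d : ℝ) * (2 * Real.pi) ^ ((d : ℝ) / 2))⁻¹ * ‖s‖ ^ 2 * Real.exp (-‖s‖ ^ 2 / 2)

/-!
Writing `Eᵢ = ‖x - Xᵢ‖² / (2σ²)` for the energies, the `p_k` form the Gibbs distribution
`e^{-E_k} / Z` with `Z = ∑ e^{-E_k}`, whose entropy is `log Z + ⟨E⟩` with `⟨E⟩ = ∑ E_k e^{-E_k} / Z`.
Hence `PP = Z · e^{⟨E⟩}`. Both kernel sums are expressed in the same quantities:
`∑ K₁ = (2π)^{-d/2} Z` and `∑ K₂ = 2 (d (2π)^{d/2})⁻¹ ∑ E_k e^{-E_k}`, so `(d/2) B/A = ⟨E⟩`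
and `(2π)^{d/2} A = Z / (nσ^d)`.
-/

open Real Finset

theorem exp_neg_sum_gibbs_mul_log {ι : Type*} [Fintype ι] [Nonempty ι] (E : ι → ℝ) :
    exp (-∑ j, exp (-E j) / (∑ k, exp (-E k)) * log (exp (-E j) / ∑ k, exp (-E k))) =
      (∑ k, exp (-E k)) * exp ((∑ j, E j * exp (-E j)) / ∑ k, exp (-E k)) := by
  set Z := ∑ k, exp (-E k)
  have hZ : 0 < Z := sum_pos (fun k _ => exp_pos _) univ_nonempty
  have hterm : ∀ j, exp (-E j) / Z * log (exp (-E j) / Z) =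
      -(E j * exp (-E j) / Z) - exp (-E j) / Z * log Z := by
    intro j
    rw [log_div (exp_ne_zero _) hZ.ne', log_exp]
    ring
  have hprob_sum : ∑ j, exp (-E j) / Z = 1 := by rw [← sum_div, div_self hZ.ne']
  have hentropy : -∑ j, exp (-E j) / Z * log (exp (-E j) / Z) =
      log Z + (∑ j, E j * exp (-E j)) / Z := by
    rw [sum_congr rfl fun j _ => hterm j, sum_sub_distrib, sum_neg_distrib, ← sum_mul,
      hprob_sum, ← sum_div]
    ring
  rw [hentropy, exp_add, exp_log hZ]

theorem norm_inv_smul_sq_div_two {E : Type*} [NormedAddCommGroup E] [NormedSpace ℝ E]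
    (σ : ℝ) (v : E) : ‖σ⁻¹ • v‖ ^ 2 / 2 = ‖v‖ ^ 2 / (2 * σ ^ 2) := by
  rw [norm_smul, mul_pow, norm_inv, norm_eq_abs, inv_pow, sq_abs]
  ring

theorem perplexity_eq_mul_exp {d n : ℕ} [Nonempty (Fin n)]
    (X : Fin n → EuclideanSpace ℝ (Fin d)) (x : EuclideanSpace ℝ (Fin d)) (σ : ℝ) :
    let E := fun i => ‖σ⁻¹ • (x - X i)‖ ^ 2 / 2
    perplexity X x σ =
      (∑ k, exp (-E k)) * exp ((∑ j, E j * exp (-E j)) / ∑ k, exp (-E k)) := by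
  simp only [← exp_neg_sum_gibbs_mul_log, perplexity, tsneP, norm_inv_smul_sq_div_two]

theorem K₁_eq {d : ℕ} (s : EuclideanSpace ℝ (Fin d)) :
    K₁ s = ((2 * π) ^ ((d : ℝ) / 2))⁻¹ * exp (-(‖s‖ ^ 2 / 2)) := by
  rw [K₁, neg_div, rpow_neg (by positivity), neg_div]

theorem K₂_eq {d : ℕ} (s : EuclideanSpace ℝ (Fin d)) :
    K₂ s = 2 * ((d : ℝ) * (2 * π) ^ ((d : ℝ) / 2))⁻¹ * (‖s‖ ^ 2 / 2) * exp (-(‖s‖ ^ 2 / 2)) := by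
  rw [K₂, neg_div]
  ring

/-- `PP_n(x|σ)/(nσ^d) = (2π)^{d/2} · A(σ) · exp((d/2)·B(σ)/A(σ))` where
`A(σ) = (nσ^d)⁻¹ Σ_i K₁((x - X_i)/σ)` and `B(σ) = (nσ^d)⁻¹ Σ_i K₂((x - X_i)/σ)`. -/
theorem stmt_8 {d n : ℕ} (hd : 0 < d) (hn : 0 < n)
    (X : Fin n → EuclideanSpace ℝ (Fin d)) (x : EuclideanSpace ℝ (Fin d))
    (σ : ℝ) (hσ : 0 < σ) :
    perplexity X x σ / ((n : ℝ) * σ ^ d) =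
      (2 * Real.pi) ^ ((d : ℝ) / 2) *
          (((n : ℝ) * σ ^ d)⁻¹ * ∑ i, K₁ (σ⁻¹ • (x - X i))) *
        Real.exp (((d : ℝ) / 2) *
          ((((n : ℝ) * σ ^ d)⁻¹ * ∑ i, K₂ (σ⁻¹ • (x - X i))) /
            (((n : ℝ) * σ ^ d)⁻¹ * ∑ i, K₁ (σ⁻¹ • (x - X i))))) := by
  have : Nonempty (Fin n) := Fin.pos_iff_nonempty.mp hn
  rw [perplexity_eq_mul_exp]
  set E := fun i => ‖σ⁻¹ • (x - X i)‖ ^ 2 / 2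
  set Z := ∑ k, exp (-E k)
  set M := ∑ j, E j * exp (-E j)
  set c := (2 * π) ^ ((d : ℝ) / 2)
  have hK₁ : ∑ i, K₁ (σ⁻¹ • (x - X i)) = c⁻¹ * Z := by simp only [K₁_eq, ← mul_sum]; rfl
  have hK₂ : ∑ i, K₂ (σ⁻¹ • (x - X i)) = 2 * (d * c)⁻¹ * M := by
    simp only [K₂_eq, mul_assoc, ← mul_sum]; rfl
  have hZ : 0 < Z := sum_pos (fun k _ => exp_pos _) univ_nonempty
  have hc : 0 < c := by positivity
  have hk : (n : ℝ) * σ ^ d ≠ 0 := by positivity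
  rw [hK₁, hK₂]
  clear_value E Z M c
  field_simp
end

section
/- Let μ be a probability measure on X, T : X → ℝ^m μ-square-integrable with ∫ T dμ = 0. Then for every β > 0, R[T] := log(∬ (1+|T(x)−T(x')|²)^{−1} dμ(x)dμ(x')) ≥ −[1/β + log(β/e) + (2/β)∫|T|² dμ]. -/
open MeasureTheory

/-- Coercivity bound for the repulsion energy of a centered square-integrable map:
`log(∬ (1+|T(x)-T(x')|²)⁻¹ dμ dμ) ≥ -(1/β + log(β/e) + (2/β)∫|T|² dμ)` for all `β > 0`. -/
theorem stmt_16 {X : Type*} [MeasurableSpace X] (μ : Measure X)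
    [IsProbabilityMeasure μ] {m : ℕ} (T : X → EuclideanSpace ℝ (Fin m))
    (hTmeas : AEStronglyMeasurable T μ) (hT : MemLp T 2 μ)
    (hcenter : ∫ x, T x ∂μ = 0) (β : ℝ) (hβ : 0 < β) :
    Real.log (∫ p, (1 + ‖T p.1 - T p.2‖ ^ 2)⁻¹ ∂(μ.prod μ)) ≥
      -(1 / β + Real.log (β / Real.exp 1) + (2 / β) * ∫ x, ‖T x‖ ^ 2 ∂μ) := by
  have h1 : MeasurePreserving Prod.fst (μ.prod μ) μ := ⟨measurable_fst, Measure.fst_prod⟩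
  have h2 : MeasurePreserving Prod.snd (μ.prod μ) μ := ⟨measurable_snd, Measure.snd_prod⟩
  have hM : MemLp (fun p : X × X => T p.1 - T p.2) 2 (μ.prod μ) :=
    (hT.comp_measurePreserving h1).sub (hT.comp_measurePreserving h2)
  set f : X × X → ℝ := fun p => ‖T p.1 - T p.2‖ ^ 2 with hf
  have hf0 : ∀ p, 0 ≤ f p := fun p => sq_nonneg _
  have hIf : Integrable f (μ.prod μ) := hM.norm.integrable_sq
  have hTsq : Integrable (fun x => ‖T x‖ ^ 2) μ := hT.norm.integrable_sq
  have hTint : Integrable T μ := hT.integrable (by norm_num)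
  -- Step 1: ∫ f = 2 ∫ ‖T‖²
  have hfint : ∫ p, f p ∂(μ.prod μ) = 2 * ∫ x, ‖T x‖ ^ 2 ∂μ := by
    rw [integral_prod f hIf]
    have hinner : ∀ x : X, ∫ y, f (x, y) ∂μ = ‖T x‖ ^ 2 + ∫ y, ‖T y‖ ^ 2 ∂μ := by
      intro x
      have hint2 : Integrable (fun y => (inner ℝ (T x) (T y) : ℝ)) μ := hTint.const_inner (T x)
      have : ∀ y, f (x, y) = (‖T x‖ ^ 2 - 2 * (inner ℝ (T x) (T y) : ℝ)) + ‖T y‖ ^ 2 := by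
        intro y
        simp only [hf]
        rw [@norm_sub_sq_real (EuclideanSpace ℝ (Fin m))]
      simp only [this]
      rw [integral_add (f := fun y => ‖T x‖ ^ 2 - 2 * (inner ℝ (T x) (T y) : ℝ))
          (g := fun y => ‖T y‖ ^ 2) ((integrable_const _).sub (hint2.const_mul 2)) hTsq,
        integral_sub (f := fun _ => (‖T x‖ ^ 2 : ℝ)) (integrable_const _) (hint2.const_mul 2),
        integral_const_mul, integral_inner hTint, hcenter, inner_zero_right, integral_const]
      simp
    simp only [hinner]
    rw [integral_add hTsq (integrable_const _), integral_const]
    simp [two_mul]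
  -- Step 2: pointwise log bound
  have hlog : ∀ p, Real.log (1 + f p) ≤ 1 / β + Real.log (β / Real.exp 1) + f p / β := by
    intro p
    have h1p : (0:ℝ) < 1 + f p := by linarith [hf0 p]
    have := Real.log_le_sub_one_of_pos (show (0:ℝ) < (1 + f p) / β by positivity)
    have hlg : Real.log ((1 + f p) / β) = Real.log (1 + f p) - Real.log β :=
      Real.log_div (by linarith) hβ.ne'
    have hlb : Real.log (β / Real.exp 1) = Real.log β - 1 := by
      rw [Real.log_div hβ.ne' (Real.exp_ne_zero 1), Real.log_exp]
    rw [hlg] at this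
    have : Real.log (1 + f p) ≤ (1 + f p) / β - 1 + Real.log β := by linarith
    rw [hlb]
    have : (1 + f p) / β = 1 / β + f p / β := by ring
    linarith [Real.log_le_sub_one_of_pos (show (0:ℝ) < (1 + f p) / β by positivity), hlg, this]
  -- integrability of log(1+f)
  have hfmeas : AEStronglyMeasurable f (μ.prod μ) := hM.aestronglyMeasurable.norm.pow 2
  have haddmeas : AEStronglyMeasurable (fun p => 1 + f p) (μ.prod μ) :=
    aestronglyMeasurable_const.add hfmeas
  have hlogmeas : AEStronglyMeasurable (fun p => Real.log (1 + f p)) (μ.prod μ) :=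
    (Real.measurable_log.comp_aemeasurable haddmeas.aemeasurable).aestronglyMeasurable
  have hlogint : Integrable (fun p => Real.log (1 + f p)) (μ.prod μ) := by
    refine hIf.mono' hlogmeas ?_
    filter_upwards with p
    have h1p : (0:ℝ) ≤ f p := hf0 p
    have hpos : 0 ≤ Real.log (1 + f p) := Real.log_nonneg (by linarith)
    rw [Real.norm_of_nonneg hpos]
    calc Real.log (1 + f p) ≤ (1 + f p) - 1 := Real.log_le_sub_one_of_pos (by linarith)
      _ = f p := by ring
  -- Jensen via convexity of exp
  set h : X × X → ℝ := fun p => -Real.log (1 + f p) with hh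
  have hhint : Integrable h (μ.prod μ) := hlogint.neg
  have hexph : ∀ p, Real.exp (h p) = (1 + f p)⁻¹ := by
    intro p
    rw [hh]
    simp only
    rw [Real.exp_neg, Real.exp_log (by linarith [hf0 p])]
  have hIexp : Integrable (fun p => (1 + f p)⁻¹) (μ.prod μ) := by
    refine (integrable_const (1:ℝ)).mono' ?_ ?_
    · exact (haddmeas.aemeasurable.inv).aestronglyMeasurable
    · filter_upwards with p
      rw [Real.norm_of_nonneg (by positivity)]
      rw [inv_le_one_iff₀]
      right; linarith [hf0 p]
  have hcomp : Real.exp ∘ h = fun p => (1 + f p)⁻¹ := funext hexph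
  have hjensen : Real.exp (∫ p, h p ∂(μ.prod μ)) ≤ ∫ p, (1 + f p)⁻¹ ∂(μ.prod μ) := by
    have := convexOn_exp.map_integral_le (μ := μ.prod μ) Real.continuous_exp.continuousOn
      isClosed_univ (Filter.Eventually.of_forall fun p => Set.mem_univ (h p)) hhint
      (by rw [hcomp]; exact hIexp)
    calc Real.exp (∫ p, h p ∂(μ.prod μ)) ≤ ∫ p, Real.exp (h p) ∂(μ.prod μ) := this
      _ = ∫ p, (1 + f p)⁻¹ ∂(μ.prod μ) := by simp only [hexph]
  have hIpos : 0 < ∫ p, (1 + f p)⁻¹ ∂(μ.prod μ) :=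
    lt_of_lt_of_le (Real.exp_pos _) hjensen
  have hloggoal : ∫ p, h p ∂(μ.prod μ) ≤ Real.log (∫ p, (1 + f p)⁻¹ ∂(μ.prod μ)) := by
    rw [← Real.log_exp (∫ p, h p ∂(μ.prod μ))]
    exact Real.log_le_log (Real.exp_pos _) hjensen
  -- bound ∫ h from below
  have hintlog : ∫ p, Real.log (1 + f p) ∂(μ.prod μ) ≤
      1 / β + Real.log (β / Real.exp 1) + (2 / β) * ∫ x, ‖T x‖ ^ 2 ∂μ := by
    have : ∫ p, Real.log (1 + f p) ∂(μ.prod μ) ≤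
        ∫ p, (1 / β + Real.log (β / Real.exp 1) + f p / β) ∂(μ.prod μ) := by
      refine integral_mono hlogint ((integrable_const _).add (hIf.div_const β)) hlog
    calc ∫ p, Real.log (1 + f p) ∂(μ.prod μ)
        ≤ ∫ p, (1 / β + Real.log (β / Real.exp 1) + f p / β) ∂(μ.prod μ) := this
      _ = 1 / β + Real.log (β / Real.exp 1) + (2 / β) * ∫ x, ‖T x‖ ^ 2 ∂μ := by
          rw [integral_add (integrable_const _) (hIf.div_const β), integral_const,
            integral_div, hfint]
          simp
          ring
  have hinth : ∫ p, h p ∂(μ.prod μ) =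
      -∫ p, Real.log (1 + f p) ∂(μ.prod μ) := by
    simp [hh, integral_neg]
  calc Real.log (∫ p, (1 + ‖T p.1 - T p.2‖ ^ 2)⁻¹ ∂(μ.prod μ))
      = Real.log (∫ p, (1 + f p)⁻¹ ∂(μ.prod μ)) := rfl
    _ ≥ ∫ p, h p ∂(μ.prod μ) := hloggoal
    _ = -∫ p, Real.log (1 + f p) ∂(μ.prod μ) := hinth
    _ ≥ -(1 / β + Real.log (β / Real.exp 1) + (2 / β) * ∫ x, ‖T x‖ ^ 2 ∂μ) :=
        neg_le_neg hintlog
end
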